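/- Suppose the step size satisfies 0 < α < 2/(L·σ²), set κ = (α/n)·(1 − L·α·σ²/2), and suppose p > 0 is such that μ(i ∈ B) ≥ p for every index i ∈ {1, …, M}. Then the expected single-step decrease of the validation loss satisfies, for every θ ∈ ℝ^d, E_{B∼μ}[G(U(θ, B, α))] ≤ G(θ) − κ·p·‖∇G(θ)‖⁴. -/

import Mathlib

/-!
By the descent lemma, one reweighted step with batch `B` lowers `G` by at least
`κ ∑ₖ c_{B k}²`, where `c_j = max ⟪∇G θ, ∇f_j θ⟫ 0`: the step's inner product with `∇G θ` is
exactly `-(α/n) ∑ₖ c_{B k}²`, while Cauchy–Schwarz bounds its squared norm by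
`(α/n)² n σ² ∑ₖ c_{B k}²`. As `∇G θ` is the average of the `∇f_i θ` over `i < M`, some such `i`
has `⟪∇G θ, ∇f_i θ⟫ ≥ ‖∇G θ‖²`; every batch containing it has `∑ₖ c_{B k}² ≥ ‖∇G θ‖⁴`, and
these batches carry mass at least `p`.
-/

open scoped RealInnerProductSpace BigOperators

open Finset

section Smooth

variable {E : Type*} [NormedAddCommGroup E] [InnerProductSpace ℝ E] [CompleteSpace E]

theorem HasGradientAt.hasDerivAt_comp_add_smul {G : E → ℝ} {g x v : E} {t : ℝ}
    (h : HasGradientAt G g (x + t • v)) :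
    HasDerivAt (fun s : ℝ => G (x + s • v)) ⟪g, v⟫ t := by
  have hline : HasDerivAt (fun s : ℝ => x + s • v) v t := by
    simpa using ((hasDerivAt_id t).smul_const v).const_add x
  simpa [Function.comp_def] using (hasGradientAt_iff_hasFDerivAt.mp h).comp_hasDerivAt t hline

/-- The descent lemma of smooth optimization. -/
theorem le_add_inner_gradient_add_norm_sq {G : E → ℝ} (hG : Differentiable ℝ G) {L : ℝ}
    (hGL : ∀ x y, ‖gradient G x - gradient G y‖ ≤ L * ‖x - y‖) (x v : E) :
    G (x + v) ≤ G x + ⟪gradient G x, v⟫ + L / 2 * ‖v‖ ^ 2 := by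
  have hφ : ∀ t : ℝ, HasDerivAt (fun s : ℝ => G (x + s • v)) ⟪gradient G (x + t • v), v⟫ t :=
    fun t => (hG _).hasGradientAt.hasDerivAt_comp_add_smul
  have hB : ∀ t : ℝ,
      HasDerivAt (fun s : ℝ => G x + s * ⟪gradient G x, v⟫ + L / 2 * s ^ 2 * ‖v‖ ^ 2)
      (⟪gradient G x, v⟫ + L * t * ‖v‖ ^ 2) t := by
    intro t
    refine ((((hasDerivAt_id t).mul_const _).const_add (G x)).add
      (((hasDerivAt_pow 2 t).const_mul (L / 2)).mul_const (‖v‖ ^ 2))).congr_deriv ?_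
    simp only [Nat.cast_ofNat]
    ring
  have hslope : ∀ t ∈ Set.Ico (0 : ℝ) 1,
      ⟪gradient G (x + t • v), v⟫ ≤ ⟪gradient G x, v⟫ + L * t * ‖v‖ ^ 2 := by
    rintro t ⟨ht, -⟩
    have hlip : ‖gradient G (x + t • v) - gradient G x‖ ≤ L * t * ‖v‖ := by
      simpa [norm_smul, abs_of_nonneg ht, mul_assoc] using hGL (x + t • v) x
    calc ⟪gradient G (x + t • v), v⟫
        = ⟪gradient G x, v⟫ + ⟪gradient G (x + t • v) - gradient G x, v⟫ := by
          rw [inner_sub_left]; ring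
      _ ≤ ⟪gradient G x, v⟫ + ‖gradient G (x + t • v) - gradient G x‖ * ‖v‖ := by
          gcongr; exact real_inner_le_norm _ _
      _ ≤ ⟪gradient G x, v⟫ + L * t * ‖v‖ ^ 2 := by
          nlinarith [mul_le_mul_of_nonneg_right hlip (norm_nonneg v)]
  simpa using image_le_of_deriv_right_le_deriv_boundary
    (HasDerivAt.continuousOn fun t _ => hφ t) (fun t _ => (hφ t).hasDerivWithinAt)
    (by simp) (HasDerivAt.continuousOn fun t _ => hB t) (fun t _ => (hB t).hasDerivWithinAt)
    hslope (Set.right_mem_Icc.mpr zero_le_one)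

theorem hasGradientAt_const_mul_sum {ι : Type*} (s : Finset ι) (c : ℝ) {f : ι → E → ℝ} {x : E}
    (hf : ∀ i ∈ s, DifferentiableAt ℝ (f i) x) :
    HasGradientAt (fun y => c * ∑ i ∈ s, f i y) (c • ∑ i ∈ s, gradient (f i) x) x := by
  rw [hasGradientAt_iff_hasFDerivAt, map_smul, map_sum]
  exact (HasFDerivAt.fun_sum fun i hi =>
    hasGradientAt_iff_hasFDerivAt.mp (hf i hi).hasGradientAt).const_mul c

end Smooth

section Reweighted

variable {E : Type*} [NormedAddCommGroup E] [InnerProductSpace ℝ E]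

theorem exists_norm_sq_le_inner_of_eq_average {m : ℕ} (hm : 0 < m) {g : E} {u : Fin m → E}
    (hg : g = (1 / (m : ℝ)) • ∑ i, u i) : ∃ i, ‖g‖ ^ 2 ≤ ⟪g, u i⟫ := by
  have hsum : ∑ _i : Fin m, ‖g‖ ^ 2 ≤ ∑ i, ⟪g, u i⟫ := by
    have : ‖g‖ ^ 2 = (1 / (m : ℝ)) * ∑ i, ⟪g, u i⟫ := by
      rw [← real_inner_self_eq_norm_sq, ← inner_sum, ← real_inner_smul_right, ← hg]
    rw [sum_const, card_univ, Fintype.card_fin, nsmul_eq_mul, this, ← mul_assoc,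
      mul_one_div_cancel (Nat.cast_ne_zero.mpr hm.ne'), one_mul]
  obtain ⟨i, -, hi⟩ := exists_le_of_sum_le (univ_nonempty_iff.mpr ⟨⟨0, hm⟩⟩) hsum
  exact ⟨i, hi⟩

/-- The update direction of reweighted SGD:
`U θ B α = θ - (α / n) • reweightedDirection (∇G θ) (fun k => ∇f_{B k} θ)`. -/
def reweightedDirection {n : ℕ} (g : E) (u : Fin n → E) : E :=
  ∑ k, max ⟪g, u k⟫ 0 • u k

theorem max_inner_zero_mul_inner (g u : E) : max ⟪g, u⟫ 0 * ⟪g, u⟫ = max ⟪g, u⟫ 0 ^ 2 := by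
  rcases le_total ⟪g, u⟫ 0 with h | h
  · simp [max_eq_right h]
  · rw [max_eq_left h, sq]

theorem inner_reweightedDirection {n : ℕ} (g : E) (u : Fin n → E) :
    ⟪g, reweightedDirection g u⟫ = ∑ k, max ⟪g, u k⟫ 0 ^ 2 := by
  simp only [reweightedDirection, inner_sum, real_inner_smul_right, max_inner_zero_mul_inner]

theorem norm_sum_smul_sq_le {n : ℕ} (c : Fin n → ℝ) {u : Fin n → E} {σ : ℝ}
    (hu : ∀ k, ‖u k‖ ≤ σ) : ‖∑ k, c k • u k‖ ^ 2 ≤ n * σ ^ 2 * ∑ k, c k ^ 2 := by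
  have hnorm : ‖∑ k, c k • u k‖ ≤ σ * ∑ k, |c k| := by
    calc ‖∑ k, c k • u k‖ ≤ ∑ k, ‖c k • u k‖ := norm_sum_le _ _
      _ ≤ ∑ k, σ * |c k| := by
          gcongr with k
          rw [norm_smul, Real.norm_eq_abs, mul_comm]
          exact mul_le_mul_of_nonneg_right (hu k) (abs_nonneg _)
      _ = σ * ∑ k, |c k| := (mul_sum _ _ _).symm
  have hCS : (∑ k, |c k|) ^ 2 ≤ n * ∑ k, c k ^ 2 := by
    simpa using sq_sum_le_card_mul_sum_sq (s := univ) (f := fun k => |c k|)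
  calc ‖∑ k, c k • u k‖ ^ 2 ≤ (σ * ∑ k, |c k|) ^ 2 := pow_le_pow_left₀ (norm_nonneg _) hnorm 2
    _ = σ ^ 2 * (∑ k, |c k|) ^ 2 := mul_pow _ _ _
    _ ≤ σ ^ 2 * (n * ∑ k, c k ^ 2) := by gcongr
    _ = n * σ ^ 2 * ∑ k, c k ^ 2 := by ring

theorem le_sub_of_reweighted_step [CompleteSpace E] {G : E → ℝ} (hG : Differentiable ℝ G)
    {L : ℝ} (hL : 0 ≤ L) (hGL : ∀ x y, ‖gradient G x - gradient G y‖ ≤ L * ‖x - y‖)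
    {n : ℕ} {u : Fin n → E} {σ : ℝ} (hu : ∀ k, ‖u k‖ ≤ σ) (β : ℝ) (θ : E) :
    G (θ - β • reweightedDirection (gradient G θ) u) ≤
      G θ - β * (1 - L * β * n * σ ^ 2 / 2) * ∑ k, max ⟪gradient G θ, u k⟫ 0 ^ 2 := by
  have hnorm : ‖reweightedDirection (gradient G θ) u‖ ^ 2 ≤
      n * σ ^ 2 * ∑ k, max ⟪gradient G θ, u k⟫ 0 ^ 2 := norm_sum_smul_sq_le _ hu
  calc G (θ - β • reweightedDirection (gradient G θ) u)
      ≤ G θ + ⟪gradient G θ, -(β • reweightedDirection (gradient G θ) u)⟫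
        + L / 2 * ‖-(β • reweightedDirection (gradient G θ) u)‖ ^ 2 := by
        rw [sub_eq_add_neg]; exact le_add_inner_gradient_add_norm_sq hG hGL θ _
    _ = G θ - β * ∑ k, max ⟪gradient G θ, u k⟫ 0 ^ 2
        + L / 2 * β ^ 2 * ‖reweightedDirection (gradient G θ) u‖ ^ 2 := by
        rw [inner_neg_right, real_inner_smul_right, inner_reweightedDirection, norm_neg,
          norm_smul, mul_pow, Real.norm_eq_abs, sq_abs]
        ring
    _ ≤ G θ - β * ∑ k, max ⟪gradient G θ, u k⟫ 0 ^ 2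
        + L / 2 * β ^ 2 * (n * σ ^ 2 * ∑ k, max ⟪gradient G θ, u k⟫ 0 ^ 2) := by gcongr
    _ = _ := by ring

end Reweighted

section Expectation

variable {Ω : Type*} [Fintype Ω] {μ : Ω → ℝ}

theorem mul_le_sum_mul_of_forall_mem_le {X : Ω → ℝ}
    (hμ : ∀ B, 0 ≤ μ B) (hX : ∀ B, 0 ≤ X B) {s : Finset Ω} {a p : ℝ} (ha : 0 ≤ a)
    (hp : p ≤ ∑ B ∈ s, μ B) (hs : ∀ B ∈ s, a ≤ X B) : p * a ≤ ∑ B, μ B * X B :=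
  calc p * a ≤ (∑ B ∈ s, μ B) * a := mul_le_mul_of_nonneg_right hp ha
    _ = ∑ B ∈ s, μ B * a := sum_mul _ _ _
    _ ≤ ∑ B ∈ s, μ B * X B := sum_le_sum fun B hB => mul_le_mul_of_nonneg_left (hs B hB) (hμ B)
    _ ≤ ∑ B, μ B * X B :=
        sum_le_sum_of_subset_of_nonneg (subset_univ s) fun B _ _ => mul_nonneg (hμ B) (hX B)

theorem sum_mul_le_sub_of_forall_le_sub {Y S : Ω → ℝ} (hμ : ∀ B, 0 ≤ μ B) (hμ1 : ∑ B, μ B = 1)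
    {a κ b : ℝ} (hκ : 0 ≤ κ) (hY : ∀ B, Y B ≤ a - κ * S B) (hS : b ≤ ∑ B, μ B * S B) :
    ∑ B, μ B * Y B ≤ a - κ * b :=
  calc ∑ B, μ B * Y B ≤ ∑ B, μ B * (a - κ * S B) :=
        sum_le_sum fun B _ => mul_le_mul_of_nonneg_left (hY B) (hμ B)
    _ = a - κ * ∑ B, μ B * S B := by
        simp only [mul_sub, sum_sub_distrib, ← sum_mul, hμ1, one_mul, mul_sum, mul_left_comm]
    _ ≤ a - κ * b := sub_le_sub_left (mul_le_mul_of_nonneg_left hS hκ) _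

end Expectation

theorem expected_descent_with_grad_pow_four_general
    (d N M n : ℕ) (hM : 0 < M) (hn : 0 < n) (hMN : M ≤ N)
    (σ L : ℝ) (hσ : 0 < σ) (hL : 0 < L)
    (f : Fin N → EuclideanSpace ℝ (Fin d) → ℝ)
    (hf : ∀ i, ContDiff ℝ 1 (f i))
    (hfb : ∀ i x, ‖gradient (f i) x‖ ≤ σ)
    (G : EuclideanSpace ℝ (Fin d) → ℝ)
    (hG : ∀ θ, G θ = (1 / (M : ℝ)) * ∑ i : Fin M, f (Fin.castLE hMN i) θ)
    (hGL : ∀ x y, ‖gradient G x - gradient G y‖ ≤ L * ‖x - y‖)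
    (U : EuclideanSpace ℝ (Fin d) → (Fin n → Fin N) → ℝ → EuclideanSpace ℝ (Fin d))
    (hU : ∀ θ B α, U θ B α = θ - (α / (n : ℝ)) • ∑ k : Fin n,
        max ⟪gradient G θ, gradient (f (B k)) θ⟫ 0 • gradient (f (B k)) θ)
    (μ : (Fin n → Fin N) → ℝ)
    (hμ0 : ∀ B, 0 ≤ μ B) (hμ1 : ∑ B : Fin n → Fin N, μ B = 1)
    (α : ℝ) (hα : 0 < α) (hα' : α < 2 / (L * σ ^ 2))
    (κ : ℝ) (hκ : κ = (α / (n : ℝ)) * (1 - L * α * σ ^ 2 / 2))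
    (p : ℝ)
    (hμp : ∀ i : Fin M,
      p ≤ ∑ B ∈ Finset.univ.filter (fun B : Fin n → Fin N => ∃ k, B k = Fin.castLE hMN i), μ B)
    (θ : EuclideanSpace ℝ (Fin d)) :
    (∑ B : Fin n → Fin N, μ B * G (U θ B α)) ≤ G θ - κ * p * ‖gradient G θ‖ ^ 4 := by
  have hgrad : ∀ x, HasGradientAt G
      ((1 / (M : ℝ)) • ∑ i : Fin M, gradient (f (Fin.castLE hMN i)) x) x := fun x => by
    rw [funext hG]
    exact hasGradientAt_const_mul_sum _ _ fun i _ => (hf _).differentiable one_ne_zero _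
  set g := gradient G θ
  set S : (Fin n → Fin N) → ℝ := fun B => ∑ k, max ⟪g, gradient (f (B k)) θ⟫ 0 ^ 2
  have hstep : ∀ B, G (U θ B α) ≤ G θ - κ * S B := fun B => by
    have h := le_sub_of_reweighted_step (fun x => (hgrad x).differentiableAt) hL.le hGL
      (u := fun k => gradient (f (B k)) θ) (fun k => hfb _ θ) (α / n) θ
    rw [mul_assoc L, div_mul_cancel₀ α (Nat.cast_ne_zero.mpr hn.ne')] at h
    rw [hU, hκ]
    exact h
  obtain ⟨i₀, hi₀⟩ := exists_norm_sq_le_inner_of_eq_average hM (hgrad θ).gradient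
  have hS : p * ‖g‖ ^ 4 ≤ ∑ B, μ B * S B := by
    refine mul_le_sum_mul_of_forall_mem_le hμ0 (fun B => sum_nonneg fun k _ => sq_nonneg _)
      (by positivity) (hμp i₀) fun B hB => ?_
    obtain ⟨k, hk⟩ := (mem_filter.mp hB).2
    calc ‖g‖ ^ 4 = (‖g‖ ^ 2) ^ 2 := by ring
      _ ≤ max ⟪g, gradient (f (B k)) θ⟫ 0 ^ 2 := by
          rw [hk]; gcongr; exact hi₀.trans (le_max_left _ _)
      _ ≤ S B :=
          single_le_sum (fun k _ => sq_nonneg (max ⟪g, gradient (f (B k)) θ⟫ 0)) (mem_univ k)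
  have hκ0 : 0 ≤ κ := by
    have : α * (L * σ ^ 2) < 2 := (lt_div_iff₀ (by positivity)).mp hα'
    rw [hκ]; exact mul_nonneg (by positivity) (by nlinarith)
  rw [mul_assoc]
  exact sum_mul_le_sub_of_forall_le_sub hμ0 hμ1 hκ0 hstep hS

/-- if `0 < α < 2/(L·σ²)`, `κ = (α/n)·(1 − L·α·σ²/2)`, and `μ(i ∈ B) ≥ p > 0`
for every index `i ∈ {1, …, M}`, then the expected single-step decrease of the validation
loss satisfies, for every `θ`, `E_{B∼μ}[G(U(θ, B, α))] ≤ G(θ) − κ·p·‖∇G(θ)‖⁴`. -/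
theorem expected_descent_with_grad_pow_four
    (d N M n : ℕ) (hd : 0 < d) (hN : 0 < N) (hM : 0 < M) (hn : 0 < n) (hMN : M ≤ N)
    (σ L : ℝ) (hσ : 0 < σ) (hL : 0 < L)
    (f : Fin N → EuclideanSpace ℝ (Fin d) → ℝ)
    (hf : ∀ i, ContDiff ℝ 1 (f i))
    (hfb : ∀ i x, ‖gradient (f i) x‖ ≤ σ)
    (G : EuclideanSpace ℝ (Fin d) → ℝ)
    (hG : ∀ θ, G θ = (1 / (M : ℝ)) * ∑ i : Fin M, f (Fin.castLE hMN i) θ)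
    (hGL : ∀ x y, ‖gradient G x - gradient G y‖ ≤ L * ‖x - y‖)
    (U : EuclideanSpace ℝ (Fin d) → (Fin n → Fin N) → ℝ → EuclideanSpace ℝ (Fin d))
    (hU : ∀ θ B α, U θ B α = θ - (α / (n : ℝ)) • ∑ k : Fin n,
        max ⟪gradient G θ, gradient (f (B k)) θ⟫ 0 • gradient (f (B k)) θ)
    (μ : (Fin n → Fin N) → ℝ)
    (hμ0 : ∀ B, 0 ≤ μ B) (hμ1 : ∑ B : Fin n → Fin N, μ B = 1)
    (α : ℝ) (hα : 0 < α) (hα' : α < 2 / (L * σ ^ 2))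
    (κ : ℝ) (hκ : κ = (α / (n : ℝ)) * (1 - L * α * σ ^ 2 / 2))
    (p : ℝ) (hp : 0 < p)
    (hμp : ∀ i : Fin M,
      p ≤ ∑ B ∈ Finset.univ.filter (fun B : Fin n → Fin N => ∃ k, B k = Fin.castLE hMN i), μ B)
    (θ : EuclideanSpace ℝ (Fin d)) :
    (∑ B : Fin n → Fin N, μ B * G (U θ B α)) ≤ G θ - κ * p * ‖gradient G θ‖ ^ 4 :=
  expected_descent_with_grad_pow_four_general d N M n hM hn hMN σ L hσ hL f hf hfb G hG hGL U hU μ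
    hμ0 hμ1 α hα hα' κ hκ p hμp θ
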